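/- Let s > 0 and q ∈ ℝ. A real number u is a global minimizer of the function u ↦ q·u + u²/2 + s·|u|₀ (where |u|₀ = 0 if u = 0 and 1 otherwise) if and only if: u = -q when q² > 2s; u ∈ {0, -q} when q² = 2s; and u = 0 when q² < 2s. -/

import Mathlib

/-! Off the origin, completing the square gives `q v + v²/2 + s = (v + q)²/2 + (s - q²/2)`, so the
objective is bounded below by `s - q²/2` there, with equality exactly at `v = -q`; at the origin it
is `0`. A minimizer is therefore `0` when `q² ≤ 2s` and `-q` when `2s ≤ q²`. -/

/-- The "L⁰ norm" of a real number: 0 if `u = 0`, else 1. -/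
noncomputable def nrm0 (u : ℝ) : ℝ := if u = 0 then 0 else 1

theorem nrm0_zero : nrm0 0 = 0 := if_pos rfl

theorem nrm0_of_ne_zero {u : ℝ} (hu : u ≠ 0) : nrm0 u = 1 := if_neg hu

noncomputable def l0Objective (s q v : ℝ) : ℝ := q * v + v ^ 2 / 2 + s * nrm0 v

section

variable {s q u : ℝ}

theorem l0Objective_zero : l0Objective s q 0 = 0 := by
  simp [l0Objective, nrm0_zero]

theorem l0Objective_of_ne_zero {v : ℝ} (hv : v ≠ 0) :
    l0Objective s q v = (v + q) ^ 2 / 2 + (s - q ^ 2 / 2) := by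
  rw [l0Objective, nrm0_of_ne_zero hv]
  ring

theorem l0Objective_neg_self (hq : q ≠ 0) : l0Objective s q (-q) = s - q ^ 2 / 2 := by
  rw [l0Objective_of_ne_zero (neg_ne_zero.mpr hq)]
  ring

theorem sub_le_l0Objective_of_ne_zero {v : ℝ} (hv : v ≠ 0) :
    s - q ^ 2 / 2 ≤ l0Objective s q v := by
  rw [l0Objective_of_ne_zero hv]
  linarith [sq_nonneg (v + q)]

theorem isMinOn_l0Objective_zero_iff (hs : 0 ≤ s) :
    IsMinOn (l0Objective s q) Set.univ 0 ↔ q ^ 2 ≤ 2 * s := by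
  rw [isMinOn_univ_iff, l0Objective_zero]
  constructor
  · intro hmin
    rcases eq_or_ne q 0 with rfl | hq
    · linarith
    · have below_neg := hmin (-q)
      rw [l0Objective_neg_self hq] at below_neg
      linarith
  · intro hqs v
    rcases eq_or_ne v 0 with rfl | hv
    · rw [l0Objective_zero]
    · linarith [sub_le_l0Objective_of_ne_zero (s := s) (q := q) hv]

theorem isMinOn_l0Objective_iff_of_ne_zero (hs : 0 ≤ s) (hu : u ≠ 0) :
    IsMinOn (l0Objective s q) Set.univ u ↔ u = -q ∧ 2 * s ≤ q ^ 2 := by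
  rw [isMinOn_univ_iff]
  constructor
  · intro hmin
    have below_zero := hmin 0
    rw [l0Objective_zero, l0Objective_of_ne_zero hu] at below_zero
    -- for `q = 0` the competitor `-q` is unavailable, but then `0` already beats `u`
    have hq : q ≠ 0 := by
      rintro rfl
      nlinarith [sq_pos_of_ne_zero hu]
    have below_neg := hmin (-q)
    rw [l0Objective_neg_self hq, l0Objective_of_ne_zero hu] at below_neg
    have hsum : u + q = 0 :=
      (pow_eq_zero_iff two_ne_zero).mp (le_antisymm (by linarith) (sq_nonneg _))
    exact ⟨eq_neg_of_add_eq_zero_left hsum, by linarith [sq_nonneg (u + q)]⟩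
  · rintro ⟨rfl, hqs⟩ v
    have hq : q ≠ 0 := neg_ne_zero.mp hu
    rw [l0Objective_neg_self hq]
    rcases eq_or_ne v 0 with rfl | hv
    · rw [l0Objective_zero]
      linarith
    · exact sub_le_l0Objective_of_ne_zero hv

end

theorem hard_threshold_characterization (s q u : ℝ) (hs : 0 < s) :
    (∀ v : ℝ, q * u + u ^ 2 / 2 + s * nrm0 u ≤ q * v + v ^ 2 / 2 + s * nrm0 v) ↔
      ((q ^ 2 > 2 * s ∧ u = -q) ∨
       (q ^ 2 = 2 * s ∧ (u = 0 ∨ u = -q)) ∨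
       (q ^ 2 < 2 * s ∧ u = 0)) := by
  change (∀ v, l0Objective s q u ≤ l0Objective s q v) ↔ _
  rw [← isMinOn_univ_iff]
  rcases eq_or_ne u 0 with rfl | hu
  · rw [isMinOn_l0Objective_zero_iff hs.le]
    grind
  · rw [isMinOn_l0Objective_iff_of_ne_zero hs.le hu]
    grind
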